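/- arXiv:2207.11107 — 2 statements merged into one kernel-verified Lean document; each statement's English description precedes it below -/
import Mathlib

section
/- Let H be a real Hilbert space, let A: H → 2^H be maximally monotone, let α > 0, and let U be a bounded self-adjoint operator with U ⪰ α·Id. Let G be the Hilbert space obtained from H with the inner product ⟨x,y⟩_{U⁻¹} = ⟨x, U⁻¹y⟩. Then the operator UA (i.e., x ↦ U(Ax)) is maximally monotone on G. -/
open scoped RealInnerProductSpace

/-! For `u = U a` and `v = U b` the pairing `⟪x - y, U⁻¹ (u - v)⟫` is just `⟪x - y, a - b⟫`, so
`U` maps the graph of `A` in `H` onto the graph of `UA` in the renormed space, and both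
monotonicity and maximality carry over. -/

section

variable {H F : Type*} [NormedAddCommGroup H] [InnerProductSpace ℝ H]
  [FunLike F H H] [AddMonoidHomClass F H H]

theorem monotone_image_of_leftInverse {U : H → H} {U' : F} (hleft : Function.LeftInverse U' U)
    {A : H → Set H} (hA : ∀ x y u v, u ∈ A x → v ∈ A y → 0 ≤ ⟪x - y, u - v⟫) :
    ∀ x y u v, u ∈ U '' A x → v ∈ U '' A y → 0 ≤ ⟪x - y, U' (u - v)⟫ := by
  rintro x y _ _ ⟨a, ha, rfl⟩ ⟨b, hb, rfl⟩
  rw [map_sub, hleft a, hleft b]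
  exact hA x y a b ha hb

theorem maximal_image_of_leftInverse_of_rightInverse {U : H → H} {U' : F}
    (hleft : Function.LeftInverse U' U) (hright : Function.RightInverse U' U) {A : H → Set H}
    (hA : ∀ x u, (∀ y v, v ∈ A y → 0 ≤ ⟪x - y, u - v⟫) → u ∈ A x) :
    ∀ x u, (∀ y v, v ∈ U '' A y → 0 ≤ ⟪x - y, U' (u - v)⟫) → u ∈ U '' A x := by
  intro x u h
  refine ⟨U' u, hA x (U' u) fun y v hv ↦ ?_, hright u⟩
  simpa only [map_sub, hleft v] using h y (U v) ⟨v, hv, rfl⟩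

end

theorem stmt9_general
    {H : Type*} [NormedAddCommGroup H] [InnerProductSpace ℝ H]
    (U U' : H →L[ℝ] H)
    (hU' : ∀ x, U (U' x) = x ∧ U' (U x) = x)
    (A : H → Set H)
    (hAmono : ∀ x y u v, u ∈ A x → v ∈ A y → 0 ≤ ⟪x - y, u - v⟫)
    (hAmax : ∀ x u, (∀ y v, v ∈ A y → 0 ≤ ⟪x - y, u - v⟫) → u ∈ A x) :
    (∀ x y u v, u ∈ (U '' A x) → v ∈ (U '' A y) →
        0 ≤ ⟪x - y, U' (u - v)⟫) ∧
    (∀ x u, (∀ y v, v ∈ (U '' A y) → 0 ≤ ⟪x - y, U' (u - v)⟫) →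
        u ∈ (U '' A x)) :=
  ⟨monotone_image_of_leftInverse (fun x ↦ (hU' x).2) hAmono,
    maximal_image_of_leftInverse_of_rightInverse (fun x ↦ (hU' x).2) (fun x ↦ (hU' x).1) hAmax⟩

/-- Lemma 3.7(i): if A is maximally monotone and U ⪰ α·Id is self-adjoint
bounded with inverse U⁻¹, then UA is maximally monotone with respect to the
inner product ⟨x,y⟩_{U⁻¹} = ⟨x, U⁻¹y⟩. -/
theorem stmt9
    {H : Type*} [NormedAddCommGroup H] [InnerProductSpace ℝ H] [CompleteSpace H]
    (α : ℝ) (hα : 0 < α)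
    (U U' : H →L[ℝ] H) (hU : IsSelfAdjoint U)
    (hU' : ∀ x, U (U' x) = x ∧ U' (U x) = x)
    (hUα : ∀ x : H, α * ‖x‖ ^ 2 ≤ ⟪U x, x⟫)
    (A : H → Set H)
    (hAmono : ∀ x y u v, u ∈ A x → v ∈ A y → 0 ≤ ⟪x - y, u - v⟫)
    (hAmax : ∀ x u, (∀ y v, v ∈ A y → 0 ≤ ⟪x - y, u - v⟫) → u ∈ A x) :
    (∀ x y u v, u ∈ (U '' A x) → v ∈ (U '' A y) →
        0 ≤ ⟪x - y, U' (u - v)⟫) ∧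
    (∀ x u, (∀ y v, v ∈ (U '' A y) → 0 ≤ ⟪x - y, U' (u - v)⟫) →
        u ∈ (U '' A x)) :=
  stmt9_general U U' hU' A hAmono hAmax
end

section
/- Let H be a real Hilbert space, α > 0, (ηₙ) a summable sequence in [0,∞), and (Wₙ) a sequence of self-adjoint operators with Wₙ ⪰ α·Id and sup_n ‖Wₙ‖ < ∞, such that (1+ηₙ)Wₙ₊₁ ⪰ Wₙ for all n. Then there exists a self-adjoint operator W with W ⪰ α·Id such that Wₙx → Wx for every x ∈ H. -/
open scoped RealInnerProductSpace
open Filter Topology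

/-!
Rescaling by the partial products `Pₙ = ∏_{k<n} (1 + ηₖ)`, which increase to a finite limit
`p ≥ 1`, turns the almost-monotone sequence `Wₙ` into a bounded increasing sequence `Pₙ Wₙ`.
A bounded increasing sequence of self-adjoint operators converges strongly (Vigier): for
`m ≤ n` the positive operator `A = Pₙ Wₙ - Pₘ Wₘ` satisfies `‖A x‖² ≤ ‖A‖ ⟪A x, x⟫`, and the
quadratic forms `⟪Pₙ Wₙ x, x⟫` converge. Hence `Wₙ x` converges, and the limit is a bounded
operator by Banach–Steinhaus; self-adjointness and `⪰ α Id` pass to the strong limit.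
-/

namespace ContinuousLinearMap

variable {H : Type*} [NormedAddCommGroup H] [InnerProductSpace ℝ H]

theorem IsPositive.inner_apply_sq_le {T : H →L[ℝ] H} (hT : T.IsPositive) (x y : H) :
    ⟪T x, y⟫ ^ 2 ≤ ⟪T x, x⟫ * ⟪T y, y⟫ := by
  have hquad : ∀ t : ℝ, 0 ≤ ⟪T y, y⟫ * (t * t) + 2 * ⟪T x, y⟫ * t + ⟪T x, x⟫ := by
    intro t
    have h := hT.inner_nonneg_left (x + t • y)
    have hyx : ⟪T y, x⟫ = ⟪T x, y⟫ := by rw [hT.inner_left_eq_inner_right, real_inner_comm]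
    simp only [map_add, map_smul, inner_add_left, inner_add_right, real_inner_smul_left,
      real_inner_smul_right, hyx] at h
    linarith
  have := discrim_le_zero hquad
  rw [discrim] at this
  linarith

theorem IsPositive.norm_apply_sq_le {T : H →L[ℝ] H} (hT : T.IsPositive) (x : H) :
    ‖T x‖ ^ 2 ≤ ‖T‖ * ⟪T x, x⟫ := by
  rcases (norm_nonneg (T x)).eq_or_lt with h | h
  · rw [← h]
    simpa using mul_nonneg (norm_nonneg T) (hT.inner_nonneg_left x)
  have hTTx : ⟪T (T x), T x⟫ ≤ ‖T‖ * ‖T x‖ ^ 2 :=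
    calc ⟪T (T x), T x⟫ ≤ ‖T (T x)‖ * ‖T x‖ := real_inner_le_norm _ _
      _ ≤ ‖T‖ * ‖T x‖ * ‖T x‖ := by gcongr; exact T.le_opNorm _
      _ = ‖T‖ * ‖T x‖ ^ 2 := by ring
  have hcs := hT.inner_apply_sq_le x (T x)
  rw [real_inner_self_eq_norm_sq] at hcs
  nlinarith [mul_le_mul_of_nonneg_left hTTx (hT.inner_nonneg_left x), pow_pos h 2]

theorem cauchySeq_apply_of_monotone {V : ℕ → H →L[ℝ] H} (hV : Monotone V) {M : ℝ}
    (hM : ∀ n, ‖V n‖ ≤ M) (x : H) : CauchySeq fun n => V n x := by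
  have hM0 : 0 ≤ M := (norm_nonneg _).trans (hM 0)
  have hq : Monotone fun n => ⟪V n x, x⟫ := fun m n hmn => by
    simpa [inner_sub_left] using ((le_def _ _).1 (hV hmn)).inner_nonneg_left x
  have hq_cauchy : CauchySeq fun n => ⟪V n x, x⟫ := by
    refine (tendsto_atTop_ciSup hq ⟨M * ‖x‖ ^ 2, ?_⟩).cauchySeq
    rintro _ ⟨n, rfl⟩
    calc ⟪V n x, x⟫ ≤ ‖V n x‖ * ‖x‖ := real_inner_le_norm _ _
      _ ≤ M * ‖x‖ * ‖x‖ := by gcongr; exact (V n).le_of_opNorm_le (hM n) x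
      _ = M * ‖x‖ ^ 2 := by ring
  have hstep : ∀ m n, m ≤ n → ‖V n x - V m x‖ ^ 2 ≤ 2 * M * (⟪V n x, x⟫ - ⟪V m x, x⟫) := by
    intro m n hmn
    have hnorm : ‖V n - V m‖ ≤ 2 * M := (norm_sub_le _ _).trans (by linarith [hM n, hM m])
    calc ‖V n x - V m x‖ ^ 2 = ‖(V n - V m) x‖ ^ 2 := rfl
      _ ≤ ‖V n - V m‖ * ⟪(V n - V m) x, x⟫ := ((le_def _ _).1 (hV hmn)).norm_apply_sq_le x
      _ ≤ 2 * M * (⟪V n x, x⟫ - ⟪V m x, x⟫) := by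
        rw [sub_apply, inner_sub_left]
        exact mul_le_mul_of_nonneg_right hnorm (sub_nonneg.2 (hq hmn))
  rw [Metric.cauchySeq_iff'] at hq_cauchy ⊢
  intro ε hε
  obtain ⟨N, hN⟩ := hq_cauchy (ε ^ 2 / (2 * M + 1)) (by positivity)
  refine ⟨N, fun n hn => ?_⟩
  have hgap : (2 * M + 1) * (⟪V n x, x⟫ - ⟪V N x, x⟫) < ε ^ 2 := by
    rw [← lt_div_iff₀' (by positivity)]
    exact (le_abs_self _).trans_lt (hN n hn)
  have hsq : ‖V n x - V N x‖ ^ 2 < ε ^ 2 := by nlinarith [hstep N n hn, hq hn]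
  rw [dist_eq_norm]
  exact lt_of_pow_lt_pow_left₀ 2 hε.le hsq

end ContinuousLinearMap

section StrongLimit

variable {𝕜 E : Type*}

theorem exists_tendsto_apply_of_forall_exists_tendsto [NontriviallyNormedField 𝕜]
    [NormedAddCommGroup E] [NormedSpace 𝕜 E] [CompleteSpace E] {F : Type*}
    [NormedAddCommGroup F] [NormedSpace 𝕜 F] {T : ℕ → E →L[𝕜] F}
    (h : ∀ x, ∃ y, Tendsto (fun n => T n x) atTop (𝓝 y)) :
    ∃ L : E →L[𝕜] F, ∀ x, Tendsto (fun n => T n x) atTop (𝓝 (L x)) := by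
  choose f hf using h
  exact ⟨continuousLinearMapOfTendsto T (tendsto_pi_nhds.2 hf), hf⟩

theorem isSelfAdjoint_of_tendsto_apply [RCLike 𝕜] [NormedAddCommGroup E]
    [InnerProductSpace 𝕜 E] [CompleteSpace E] {T : ℕ → E →L[𝕜] E} {L : E →L[𝕜] E}
    (hT : ∀ n, IsSelfAdjoint (T n)) (h : ∀ x, Tendsto (fun n => T n x) atTop (𝓝 (L x))) :
    IsSelfAdjoint L := by
  refine ContinuousLinearMap.isSelfAdjoint_iff_isSymmetric.2 fun u v => ?_
  refine tendsto_nhds_unique ((h u).inner (𝕜 := 𝕜) tendsto_const_nhds) ?_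
  exact ((tendsto_const_nhds (x := u)).inner (𝕜 := 𝕜) (h v)).congr fun n =>
    ((hT n).isSymmetric u v).symm

end StrongLimit

section Rescaling

variable {η : ℕ → ℝ}

theorem monotone_prod_range_one_add (hη : ∀ n, 0 ≤ η n) :
    Monotone fun n => ∏ k ∈ Finset.range n, (1 + η k) :=
  monotone_nat_of_le_succ fun n => by
    rw [Finset.prod_range_succ]
    exact le_mul_of_one_le_right (Finset.prod_nonneg fun k _ => by linarith [hη k])
      (by linarith [hη n])

theorem one_le_prod_range_one_add (hη : ∀ n, 0 ≤ η n) (n : ℕ) :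
    1 ≤ ∏ k ∈ Finset.range n, (1 + η k) := by
  simpa using monotone_prod_range_one_add hη (Nat.zero_le n)

variable {H : Type*} [NormedAddCommGroup H] [InnerProductSpace ℝ H] [CompleteSpace H]

theorem monotone_prod_range_one_add_smul (hη : ∀ n, 0 ≤ η n) {W : ℕ → H →L[ℝ] H}
    (hW : ∀ n, IsSelfAdjoint (W n))
    (hmono : ∀ n, ∀ x : H, ⟪W n x, x⟫ ≤ (1 + η n) * ⟪W (n + 1) x, x⟫) :
    Monotone fun n => (∏ k ∈ Finset.range n, (1 + η k)) • W n :=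
  monotone_nat_of_le_succ fun n => by
    rw [ContinuousLinearMap.le_def, ContinuousLinearMap.isPositive_iff']
    refine ⟨((IsSelfAdjoint.all _).smul (hW _)).sub ((IsSelfAdjoint.all _).smul (hW _)),
      fun x => ?_⟩
    simp only [Finset.prod_range_succ, sub_apply, smul_apply, inner_sub_left,
      real_inner_smul_left]
    have hP := zero_le_one.trans (one_le_prod_range_one_add hη n)
    nlinarith [mul_le_mul_of_nonneg_left (hmono n x) hP]

end Rescaling

theorem stmt13_general
    {H : Type*} [NormedAddCommGroup H] [InnerProductSpace ℝ H] [CompleteSpace H]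
    (α : ℝ)
    (η : ℕ → ℝ) (hη : ∀ n, 0 ≤ η n) (hηs : Summable η)
    (W : ℕ → (H →L[ℝ] H)) (hW : ∀ n, IsSelfAdjoint (W n))
    (hWα : ∀ n, ∀ x : H, α * ‖x‖ ^ 2 ≤ ⟪W n x, x⟫)
    (hWb : ∃ μ : ℝ, ∀ n, ‖W n‖ ≤ μ)
    (hmono : ∀ n, ∀ x : H, ⟪W n x, x⟫ ≤ (1 + η n) * ⟪W (n + 1) x, x⟫) :
    ∃ Wlim : H →L[ℝ] H, IsSelfAdjoint Wlim ∧
      (∀ x : H, α * ‖x‖ ^ 2 ≤ ⟪Wlim x, x⟫) ∧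
      (∀ x : H, Tendsto (fun n => W n x) atTop (nhds (Wlim x))) := by
  obtain ⟨μ, hμ⟩ := hWb
  set P : ℕ → ℝ := fun n => ∏ k ∈ Finset.range n, (1 + η k)
  have hP1 : ∀ n, 1 ≤ P n := one_le_prod_range_one_add hη
  obtain ⟨p, hPp⟩ : ∃ p, Tendsto P atTop (𝓝 p) :=
    ⟨_, (Real.multipliable_one_add_of_summable hηs).hasProd.tendsto_prod_nat⟩
  have hp1 : 1 ≤ p := ge_of_tendsto' hPp hP1
  have hVbdd : ∀ n, ‖P n • W n‖ ≤ p * μ := fun n => by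
    rw [norm_smul, Real.norm_of_nonneg (zero_le_one.trans (hP1 n))]
    exact mul_le_mul ((monotone_prod_range_one_add hη).ge_of_tendsto hPp n) (hμ n)
      (norm_nonneg _) (by linarith)
  have hconv : ∀ x, ∃ y, Tendsto (fun n => W n x) atTop (𝓝 y) := fun x => by
    obtain ⟨y, hy⟩ := cauchySeq_tendsto_of_complete <|
      ContinuousLinearMap.cauchySeq_apply_of_monotone
        (monotone_prod_range_one_add_smul hη hW hmono) hVbdd x
    refine ⟨p⁻¹ • y, ((hPp.inv₀ (by positivity)).smul hy).congr fun n => ?_⟩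
    change (P n)⁻¹ • (P n • W n) x = W n x
    rw [smul_apply, inv_smul_smul₀ (zero_lt_one.trans_le (hP1 n)).ne']
  obtain ⟨L, hL⟩ := exists_tendsto_apply_of_forall_exists_tendsto hconv
  refine ⟨L, isSelfAdjoint_of_tendsto_apply hW hL, fun x => ?_, hL⟩
  exact ge_of_tendsto' ((hL x).inner tendsto_const_nhds) fun n => hWα n x

/-- Lemma 2.2 of Combettes–Vũ: a variable-metric sequence (Wₙ) with
(1+ηₙ)Wₙ₊₁ ⪰ Wₙ, Wₙ ⪰ α·Id and sup‖Wₙ‖ < ∞ converges pointwise to some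
W ⪰ α·Id. -/
theorem stmt13
    {H : Type*} [NormedAddCommGroup H] [InnerProductSpace ℝ H] [CompleteSpace H]
    (α : ℝ) (hα : 0 < α)
    (η : ℕ → ℝ) (hη : ∀ n, 0 ≤ η n) (hηs : Summable η)
    (W : ℕ → (H →L[ℝ] H)) (hW : ∀ n, IsSelfAdjoint (W n))
    (hWα : ∀ n, ∀ x : H, α * ‖x‖ ^ 2 ≤ ⟪W n x, x⟫)
    (hWb : ∃ μ : ℝ, ∀ n, ‖W n‖ ≤ μ)
    (hmono : ∀ n, ∀ x : H, ⟪W n x, x⟫ ≤ (1 + η n) * ⟪W (n + 1) x, x⟫) :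
    ∃ Wlim : H →L[ℝ] H, IsSelfAdjoint Wlim ∧
      (∀ x : H, α * ‖x‖ ^ 2 ≤ ⟪Wlim x, x⟫) ∧
      (∀ x : H, Tendsto (fun n => W n x) atTop (nhds (Wlim x))) :=
  stmt13_general α η hη hηs W hW hWα hWb hmono
end
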